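/- For g = 1 and real matrices M = (a b; c d), S with determinant 1, writing (m₁,m₂) for the second row of M and (m₁',m₂') for the second row of MS: if m₁ c m₁' ≠ 0 and either m₁m₁' > 0 or m₁c < 0, then w(M,S) = 0. -/
import Mathlib


open Matrix Complex

noncomputable section

/-- The genus-one automorphy factor `J((a b; c d), z) = c z + d`. -/
def j1 (M : Matrix (Fin 2) (Fin 2) ℝ) (z : ℂ) : ℂ := M 1 0 * z + M 1 1

/-- The Möbius action of a real `2×2` matrix on the upper half plane. -/
def act1 (M : Matrix (Fin 2) (Fin 2) ℝ) (z : ℂ) : ℂ :=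
  (M 0 0 * z + M 0 1) / (M 1 0 * z + M 1 1)

/-- The genus-one cocycle: `2π w(M,N) = Arg J(MN,i) - Arg J(M,N(i)) - Arg J(N,i)`,
all three arguments being principal values in `(-π,π]` (for the middle term the
continuous continuation agrees with the principal value, since `cz+d` never
crosses the real axis for `z` in the upper half plane). -/
def w1 (M N : Matrix (Fin 2) (Fin 2) ℝ) : ℝ :=
  ((j1 (M * N) Complex.I).arg - (j1 M (act1 N Complex.I)).arg
    - (j1 N Complex.I).arg) / (2 * Real.pi)

set_option maxHeartbeats 1000000 in
/-- (Corollary to Maass' table.) For `M, S ∈ SL(2,ℝ)` with `(m₁,m₂)` the second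
row of `M` and `m₁'` the first entry of the second row of `MS`, `c = S 1 0`:
if `m₁ c m₁' ≠ 0` and either `m₁ m₁' > 0` or `m₁ c < 0`, then `w(M,S) = 0`. -/
theorem w1_corollary_vanishing
    (M S : Matrix (Fin 2) (Fin 2) ℝ) (hM : M.det = 1) (hS : S.det = 1)
    (hne : M 1 0 * S 1 0 * (M * S) 1 0 ≠ 0)
    (hsgn : 0 < M 1 0 * (M * S) 1 0 ∨ M 1 0 * S 1 0 < 0) :
    w1 M S = 0 := by
  have hm₁ : M 1 0 ≠ 0 := fun h => hne (by simp [h])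
  have hc : S 1 0 ≠ 0 := fun h => hne (by simp [h])
  have hm₁' : (M * S) 1 0 ≠ 0 := fun h => hne (by simp [h])
  set A := j1 M (act1 S Complex.I) with hAdef
  set B := j1 S Complex.I with hBdef
  set C := j1 (M * S) Complex.I with hCdef
  have hBim : B.im = S 1 0 := by simp [hBdef, j1]
  have hBre : B.re = S 1 1 := by simp [hBdef, j1]
  have hCim : C.im = (M * S) 1 0 := by simp [hCdef, j1]
  have hCre : C.re = (M * S) 1 1 := by simp [hCdef, j1]
  have hBne : B ≠ 0 := fun h => hc (by rw [← hBim, h]; simp)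
  have hBne' : ((S 1 0 : ℂ) * Complex.I + S 1 1) ≠ 0 := hBne
  have hmulS : (M * S) 1 0 = M 1 0 * S 0 0 + M 1 1 * S 1 0 := by
    simp [Matrix.mul_apply, Fin.sum_univ_two]
  have hmulS' : (M * S) 1 1 = M 1 0 * S 0 1 + M 1 1 * S 1 1 := by
    simp [Matrix.mul_apply, Fin.sum_univ_two]
  have hdetS : S 0 0 * S 1 1 - S 0 1 * S 1 0 = 1 := by
    rw [← hS]; simp [Matrix.det_fin_two]
  have hcoc : C = A * B := by
    rw [hAdef, hBdef, hCdef]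
    unfold j1 act1
    rw [add_mul, mul_assoc, div_mul_cancel₀ _ hBne']
    rw [hmulS, hmulS']
    push_cast
    ring
  have hCne : C ≠ 0 := fun h => hm₁' (by rw [← hCim, h]; simp)
  have hAne : A ≠ 0 := by
    intro h; rw [h, zero_mul] at hcoc; exact hCne hcoc
  have hAeq : A = C / B := by rw [hcoc]; field_simp
  have hsqpos : (0:ℝ) < S 1 0 ^ 2 + S 1 1 ^ 2 := by positivity
  have hAim : A.im * (S 1 0 ^ 2 + S 1 1 ^ 2) = M 1 0 := by
    rw [hAeq, Complex.div_im, hCim, hBre, hBim, hCre]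
    have hsq : Complex.normSq B = S 1 0 ^ 2 + S 1 1 ^ 2 := by
      rw [Complex.normSq_apply, hBre, hBim]; ring
    rw [hsq, hmulS, hmulS', div_sub_div_same, div_mul_cancel₀ _ (ne_of_gt hsqpos)]
    linear_combination M 1 0 * hdetS
  have hAimval : A.im = M 1 0 / (S 1 0 ^ 2 + S 1 1 ^ 2) := by
    rw [eq_div_iff hsqpos.ne']; exact hAim
  have hpi := Real.pi_pos
  have bdd : ∀ z : ℂ, z.im ≠ 0 → -Real.pi < z.arg ∧ z.arg < Real.pi ∧ z.arg ≠ 0 := by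
    intro z hz
    refine ⟨Complex.neg_pi_lt_arg z,
      lt_of_le_of_ne (Complex.arg_le_pi z) (fun h => hz (Complex.arg_eq_pi_iff.mp h).2),
      fun h => hz (Complex.arg_eq_zero_iff.mp h).2⟩
  have hBb := bdd B (by rw [hBim]; exact hc)
  have hCb := bdd C (by rw [hCim]; exact hm₁')
  have hAimne : A.im ≠ 0 := by
    intro h; apply hm₁; rw [← hAim, h, zero_mul]
  have hAb := bdd A hAimne
  have hangle : (C.arg : Real.Angle) = ((A.arg + B.arg : ℝ) : Real.Angle) := by
    rw [hcoc, Complex.arg_mul_coe_angle hAne hBne, Real.Angle.coe_add]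
  obtain ⟨k, hk⟩ := Real.Angle.angle_eq_iff_two_pi_dvd_sub.mp hangle
  have hdiff : C.arg - A.arg - B.arg = 2 * Real.pi * k := by linarith [hk]
  have hbound : -(2*Real.pi) < C.arg - A.arg - B.arg ∧ C.arg - A.arg - B.arg < 2*Real.pi := by
    rcases hsgn with h | h
    · rcases lt_or_gt_of_ne hm₁ with hm | hm
      · have hm' : (M * S) 1 0 < 0 := by nlinarith
        have hAneg : A.arg < 0 := Complex.arg_neg_iff.mpr (by rw [hAimval]; exact div_neg_of_neg_of_pos hm hsqpos)
        have hCneg : C.arg < 0 := Complex.arg_neg_iff.mpr (by rw [hCim]; exact hm')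
        constructor
        · linarith [hAb.2.1, hBb.2.1, hCb.1]
        · linarith [hAb.1, hBb.1, hCb.2.1]
      · have hm' : 0 < (M * S) 1 0 := by nlinarith
        have hApos : 0 < A.arg :=
          lt_of_le_of_ne (Complex.arg_nonneg_iff.mpr (by rw [hAimval]; exact (div_pos hm hsqpos).le)) (Ne.symm hAb.2.2)
        have hCpos : 0 < C.arg :=
          lt_of_le_of_ne (Complex.arg_nonneg_iff.mpr (by rw [hCim]; exact hm'.le)) (Ne.symm hCb.2.2)
        constructor
        · linarith [hAb.2.1, hBb.2.1]
        · linarith [hAb.1, hBb.1, hCb.2.1]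
    · rcases lt_or_gt_of_ne hm₁ with hm | hm
      · have hcpos : 0 < S 1 0 := by nlinarith
        have hAneg : A.arg < 0 := Complex.arg_neg_iff.mpr (by rw [hAimval]; exact div_neg_of_neg_of_pos hm hsqpos)
        have hBpos : 0 < B.arg :=
          lt_of_le_of_ne (Complex.arg_nonneg_iff.mpr (by rw [hBim]; exact hcpos.le)) (Ne.symm hBb.2.2)
        constructor
        · linarith [hAb.2.1, hBb.2.1, hCb.1]
        · linarith [hCb.2.1]
      · have hcneg : S 1 0 < 0 := by nlinarith
        have hApos : 0 < A.arg :=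
          lt_of_le_of_ne (Complex.arg_nonneg_iff.mpr (by rw [hAimval]; exact (div_pos hm hsqpos).le)) (Ne.symm hAb.2.2)
        have hBneg : B.arg < 0 := Complex.arg_neg_iff.mpr (by rw [hBim]; exact hcneg)
        constructor
        · linarith [hCb.1]
        · linarith [hCb.2.1]
  have hk0 : k = 0 := by
    have h1 : -(2*Real.pi) < 2*Real.pi*(k:ℝ) := by rw [← hdiff]; exact hbound.1
    have h2 : 2*Real.pi*(k:ℝ) < 2*Real.pi := by rw [← hdiff]; exact hbound.2
    have h3 : (-1 : ℝ) < (k:ℝ) := by nlinarith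
    have h4 : (k:ℝ) < 1 := by nlinarith
    have h3' : (-1 : ℤ) < k := by exact_mod_cast h3
    have h4' : k < 1 := by exact_mod_cast h4
    omega
  have hzero : C.arg - A.arg - B.arg = 0 := by rw [hdiff, hk0]; simp
  have hw : w1 M S = (C.arg - A.arg - B.arg) / (2 * Real.pi) := rfl
  rw [hw, hzero, zero_div]
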